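/- Let Z be a UFD in which every quotient by a prime principal ideal is infinite, and suppose the Schinzel Hypothesis holds for Z (for any finitely many polynomials in Z[y] irreducible over Frac(Z), pairwise non-associate over Frac(Z), satisfying (AV1), and any finite set S of primes of Z, there is m ∈ Z making all values prime, pairwise non-associate, and non-associate to primes in S). Then the relative Schinzel Hypothesis holds for Z: for any s ≥ 2 nonzero polynomials P_1,...,P_s ∈ Z[y] with no common divisor in Frac(Z)[y] and satisfying (AV2), there exists m ∈ Z such that P_1(m),...,P_s(m) have no common non-unit divisor in Z. -/

import Mathlib

/-! Since the `Pᵢ` have no common factor in `K[X]`, clearing denominators in a Bézout identity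
gives `∑ uᵢ Pᵢ = C δ` with `0 ≠ δ ∈ Z`, so every common divisor of the values `Pᵢ(m)` divides `δ`.
For each of the finitely many primes `p ∣ δ`, (AV2) provides some `Pᵢ` that is nonzero mod `p`,
so `p` divides all `Pᵢ(m)` only for `m` in finitely many residue classes mod `p`. As every
`Z ⧸ (p)` is infinite, B. H. Neumann's lemma says that these finitely many cosets of
infinite-index subgroups cannot cover `Z`, and any `m` outside them works. -/

open Polynomial
open scoped Pointwise

theorem exists_sum_mul_eq_one_of_forall_dvd_isUnit {R ι : Type*} [CommRing R]
    [IsPrincipalIdealRing R] [Fintype ι] (f : ι → R)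
    (hf : ∀ d, (∀ i, d ∣ f i) → IsUnit d) : ∃ c : ι → R, ∑ i, c i * f i = 1 := by
  obtain ⟨g, hg⟩ := Submodule.IsPrincipal.principal (Ideal.span (Set.range f))
  rw [Ideal.submodule_span_eq] at hg
  have hgf : ∀ i, g ∣ f i := fun i => by
    rw [← Ideal.mem_span_singleton, ← hg]
    exact Ideal.subset_span ⟨i, rfl⟩
  rw [← Ideal.mem_span_range_iff_exists_fun, hg, Ideal.span_singleton_eq_top.mpr (hf g hgf)]
  trivial

attribute [local instance] Polynomial.algebra Polynomial.isLocalization in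
theorem exists_ne_zero_sum_mul_eq_C {Z K ι : Type*} [CommRing Z] [Nontrivial Z] [Field K]
    [Algebra Z K] [IsFractionRing Z K] [Fintype ι] (P : ι → Z[X])
    (hP : ∀ d : K[X], (∀ i, d ∣ (P i).map (algebraMap Z K)) → IsUnit d) :
    ∃ δ : Z, δ ≠ 0 ∧ ∃ u : ι → Z[X], ∑ i, u i * P i = C δ := by
  obtain ⟨c, hc⟩ := exists_sum_mul_eq_one_of_forall_dvd_isUnit _ hP
  obtain ⟨⟨_, δ, hδ, rfl⟩, hb⟩ :=
    IsLocalization.exist_integer_multiples_of_finite (Submonoid.map C (nonZeroDivisors Z)) c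
  choose u hu using hb
  refine ⟨δ, nonZeroDivisors.ne_zero hδ, u, (map_injective _ (IsFractionRing.injective Z K)) ?_⟩
  simp only [Algebra.smul_def, Polynomial.algebraMap_def, coe_mapRingHom, Polynomial.map_C] at hu
  simp only [Polynomial.map_sum, Polynomial.map_mul, hu, Polynomial.map_C, mul_assoc,
    ← Finset.mul_sum, hc, mul_one]

theorem AddSubgroup.exists_forall_notMem_of_subset_cosets {G ι : Type*} [AddGroup G]
    (T : Finset ι) (H : ι → AddSubgroup G) (hH : ∀ j ∈ T, Infinite (G ⧸ H j)) (B : ι → Set G)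
    (hB : ∀ j ∈ T, ∃ F : Finset G, B j ⊆ ⋃ x ∈ F, x +ᵥ (H j : Set G)) :
    ∃ m, ∀ j ∈ T, m ∉ B j := by
  choose! F hF using hB
  by_contra! hcover
  have hcovers : ⋃ k ∈ T.sigma F, k.2 +ᵥ (H k.1 : Set G) = Set.univ := by
    refine Set.eq_univ_of_forall fun m => ?_
    obtain ⟨j, hj, hm⟩ := hcover m
    obtain ⟨x, hx, hmx⟩ := Set.mem_iUnion₂.mp (hF j hj hm)
    exact Set.mem_biUnion (x := ⟨j, x⟩) (Finset.mem_sigma.mpr ⟨hj, hx⟩) hmx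
  obtain ⟨⟨j, x⟩, hk, hfin⟩ := AddSubgroup.exists_finiteIndex_of_leftCoset_cover hcovers
  have := hH j (Finset.mem_sigma.mp hk).1
  exact hfin.index_ne_zero (AddSubgroup.index_eq_zero_iff_infinite.mpr this)

theorem Ideal.exists_finset_setOf_eval_mem_subset_cosets {Z : Type*} [CommRing Z]
    (I : Ideal Z) [I.IsPrime] (f : Z[X]) (hf : ∃ m, f.eval m ∉ I) :
    ∃ F : Finset Z, {m | f.eval m ∈ I} ⊆ ⋃ x ∈ F, x +ᵥ (I : Set Z) := by
  classical
  have hsurj := Ideal.Quotient.mk_surjective (I := I)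
  have hf0 : f.map (Ideal.Quotient.mk I) ≠ 0 := by
    obtain ⟨m, hm⟩ := hf
    contrapose! hm
    rw [← Ideal.Quotient.eq_zero_iff_mem, ← eval₂_at_apply, ← eval_map, hm, eval_zero]
  have hroots := finite_setOfPred_isRoot hf0
  refine ⟨hroots.toFinset.image (Function.surjInv hsurj), fun m hm => ?_⟩
  have hroot : (f.map (Ideal.Quotient.mk I)).IsRoot (Ideal.Quotient.mk I m) := by
    rwa [IsRoot, eval_map, eval₂_at_apply, Ideal.Quotient.eq_zero_iff_mem]
  refine Set.mem_biUnion (Finset.mem_image_of_mem _ (hroots.mem_toFinset.mpr hroot)) ?_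
  rw [mem_leftAddCoset_iff, neg_add_eq_sub, SetLike.mem_coe, ← Ideal.Quotient.eq,
    Function.surjInv_eq hsurj]

theorem exists_finset_setOf_forall_dvd_eval_subset_cosets {Z ι : Type*} [CommRing Z]
    (P : ι → Z[X]) {p : Z} (hp : Prime p) (hP : ∃ m i, ¬ p ∣ (P i).eval m) :
    ∃ F : Finset Z, {m | ∀ i, p ∣ (P i).eval m} ⊆
      ⋃ x ∈ F, x +ᵥ ((Ideal.span {p}).toAddSubgroup : Set Z) := by
  obtain ⟨m₀, i₀, hi₀⟩ := hP
  have : (Ideal.span {p}).IsPrime := (Ideal.span_singleton_prime hp.ne_zero).mpr hp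
  obtain ⟨F, hF⟩ := (Ideal.span {p}).exists_finset_setOf_eval_mem_subset_cosets (P i₀)
    ⟨m₀, by rwa [Ideal.mem_span_singleton]⟩
  exact ⟨F, fun m hm => hF (Ideal.mem_span_singleton.mpr (hm i₀))⟩

theorem dvd_of_forall_dvd_eval_of_sum_mul_eq_C {Z ι : Type*} [CommRing Z] [Fintype ι]
    {P u : ι → Z[X]} {δ : Z} (hu : ∑ i, u i * P i = C δ) {m d : Z}
    (hd : ∀ i, d ∣ (P i).eval m) : d ∣ δ := by
  have := congrArg (eval m) hu
  rw [eval_finsetSum, eval_C] at this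
  exact this ▸ Finset.dvd_sum fun i _ => by rw [eval_mul]; exact (hd i).mul_left _

theorem UniqueFactorizationMonoid.exists_mem_factors_dvd {α : Type*}
    [CommMonoidWithZero α] [UniqueFactorizationMonoid α] {a d : α} (ha : a ≠ 0)
    (hda : d ∣ a) (hd : ¬IsUnit d) : ∃ p ∈ factors a, p ∣ d := by
  obtain ⟨q, hq, hqd⟩ := WfDvdMonoid.exists_irreducible_factor hd (ne_zero_of_dvd_ne_zero ha hda)
  obtain ⟨p, hp, hqp⟩ := exists_mem_factors_of_dvd ha hq (hqd.trans hda)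
  exact ⟨p, hp, hqp.symm.dvd.trans hqd⟩

theorem stmt_19_general {Z : Type*} [CommRing Z] [IsDomain Z] [UniqueFactorizationMonoid Z]
    (hres : ∀ p : Z, Prime p → Infinite (Z ⧸ Ideal.span {p})) :
    ∀ (s : ℕ), 2 ≤ s → ∀ (P : Fin s → Polynomial Z), (∀ i, P i ≠ 0) →
      (∀ d : Polynomial (FractionRing Z),
        (∀ i, d ∣ (P i).map (algebraMap Z (FractionRing Z))) → IsUnit d) →
      (∀ p : Z, Prime p → ∃ m : Z, ∃ i, ¬ p ∣ (P i).eval m) →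
      ∃ m : Z, ∀ d : Z, (∀ i, d ∣ (P i).eval m) → IsUnit d := by
  classical
  intro s _ P _ hcop hAV2
  obtain ⟨δ, hδ, u, hu⟩ := exists_ne_zero_sum_mul_eq_C P hcop
  set T := (UniqueFactorizationMonoid.factors δ).toFinset
  have hT : ∀ p ∈ T, Prime p := fun p hp =>
    UniqueFactorizationMonoid.prime_of_factor p (Multiset.mem_toFinset.mp hp)
  obtain ⟨m, hm⟩ := AddSubgroup.exists_forall_notMem_of_subset_cosets T
    (fun p => (Ideal.span {p}).toAddSubgroup) (fun p hp => hres p (hT p hp))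
    (fun p => {m | ∀ i, p ∣ (P i).eval m})
    fun p hp => exists_finset_setOf_forall_dvd_eval_subset_cosets P (hT p hp) (hAV2 p (hT p hp))
  refine ⟨m, fun d hd => by_contra fun hdu => ?_⟩
  obtain ⟨p, hp, hpd⟩ := UniqueFactorizationMonoid.exists_mem_factors_dvd hδ
    (dvd_of_forall_dvd_eval_of_sum_mul_eq_C hu hd) hdu
  exact hm p (Multiset.mem_toFinset.mpr hp) fun i => hpd.trans (hd i)

theorem stmt_19 {Z : Type*} [CommRing Z] [IsDomain Z] [UniqueFactorizationMonoid Z]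
    (hres : ∀ p : Z, Prime p → Infinite (Z ⧸ Ideal.span {p}))
    (hSchinzel : ∀ (n : ℕ) (P : Fin n → Polynomial Z),
      (∀ i, Irreducible ((P i).map (algebraMap Z (FractionRing Z)))) →
      (∀ i j, i ≠ j → ¬ Associated ((P i).map (algebraMap Z (FractionRing Z)))
        ((P j).map (algebraMap Z (FractionRing Z)))) →
      (∀ p : Z, Prime p → ∃ m : Z, ¬ p ∣ (∏ i, P i).eval m) →
      ∀ S : Finset Z, (∀ q ∈ S, Prime q) →
        ∃ m : Z, (∀ i, Prime ((P i).eval m)) ∧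
          (∀ i j, i ≠ j → ¬ Associated ((P i).eval m) ((P j).eval m)) ∧
          (∀ i, ∀ q ∈ S, ¬ Associated ((P i).eval m) q)) :
    ∀ (s : ℕ), 2 ≤ s → ∀ (P : Fin s → Polynomial Z), (∀ i, P i ≠ 0) →
      (∀ d : Polynomial (FractionRing Z),
        (∀ i, d ∣ (P i).map (algebraMap Z (FractionRing Z))) → IsUnit d) →
      (∀ p : Z, Prime p → ∃ m : Z, ∃ i, ¬ p ∣ (P i).eval m) →
      ∃ m : Z, ∀ d : Z, (∀ i, d ∣ (P i).eval m) → IsUnit d :=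
  stmt_19_general hres
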